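/- Let M be any linear operator on a finite-dimensional Hilbert space A and let σ be a positive definite operator on A. Then the trace norm of M satisfies ‖M‖₁ ≤ sqrt( tr[σ] · tr[σ^{-1/4} M σ^{-1/2} M† σ^{-1/4}] ). -/

import Mathlib

open Matrix Kronecker
open scoped ComplexOrder

/-- `Matrix.PosSemidef.sqrt`, removed from Mathlib; restored with its former definition. -/
noncomputable def Matrix.PosSemidef.sqrt {n 𝕜 : Type*} [Fintype n] [RCLike 𝕜] [DecidableEq n]
    {A : Matrix n n 𝕜} (hA : A.PosSemidef) : Matrix n n 𝕜 :=
  hA.1.eigenvectorUnitary.1 * diagonal ((↑) ∘ (√·) ∘ hA.1.eigenvalues) *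
  (star hA.1.eigenvectorUnitary : Matrix n n 𝕜)

theorem Matrix.PosSemidef.posSemidef_sqrt {n 𝕜 : Type*} [Fintype n] [RCLike 𝕜] [DecidableEq n]
    {A : Matrix n n 𝕜} (hA : A.PosSemidef) : hA.sqrt.PosSemidef := by
  have h : (diagonal ((↑) ∘ (√·) ∘ hA.1.eigenvalues) : Matrix n n 𝕜).PosSemidef :=
    posSemidef_diagonal_iff.mpr fun i => by simp [RCLike.ofReal_nonneg, Real.sqrt_nonneg]
  simpa [Matrix.PosSemidef.sqrt, Matrix.star_eq_conjTranspose] using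
    h.mul_mul_conjTranspose_same (hA.1.eigenvectorUnitary : Matrix n n 𝕜)

noncomputable def traceNorm {n m : Type*} [Fintype n] [Fintype m] [DecidableEq m]
    (M : Matrix n m ℂ) : ℝ :=
  ((Matrix.posSemidef_conjTranspose_mul_self M).sqrt.trace).re

noncomputable def ptraceFst {a b : Type*} [Fintype a]
    (M : Matrix (a × b) (a × b) ℂ) : Matrix b b ℂ :=
  Matrix.of fun i j => ∑ k, M (k, i) (k, j)

noncomputable def ptraceSnd {a b : Type*} [Fintype b]
    (M : Matrix (a × b) (a × b) ℂ) : Matrix a a ℂ :=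
  Matrix.of fun i j => ∑ k, M (i, k) (j, k)

/-!
Let `|M| = U†M` be the polar decomposition of `M`, with `U` a partial isometry, and write
`A = σ^{1/4}`. Then `‖M‖₁ = Re tr(U†M) = Re tr((A⁻¹MA⁻¹)(AUA)†)`, and the Cauchy–Schwarz
inequality for the Hilbert–Schmidt inner product bounds this by
`‖A⁻¹MA⁻¹‖₂ · ‖AUA‖₂`. The square of the first factor is the second trace of the claim, and
`‖AUA‖₂² = Re tr(U σ^{1/2} U† σ^{1/2}) ≤ tr σ`, again by Cauchy–Schwarz, since `U†U` and `UU†`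
are projections.
-/

namespace Matrix

variable {m n 𝕜 : Type*} [Fintype m] [Fintype n] [RCLike 𝕜]

theorem PosSemidef.sqrt_mul_self [DecidableEq n] {A : Matrix n n 𝕜} (hA : A.PosSemidef) :
    hA.sqrt * hA.sqrt = A := by
  rw [show hA.sqrt = Unitary.conjStarAlgAut 𝕜 _ hA.1.eigenvectorUnitary
      (diagonal ((↑) ∘ (√·) ∘ hA.1.eigenvalues)) from rfl, ← map_mul, diagonal_mul_diagonal]
  conv_rhs => rw [hA.1.spectral_theorem]
  congr 2
  funext i
  simp [← RCLike.ofReal_mul, Real.mul_self_sqrt (hA.eigenvalues_nonneg i)]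

theorem re_trace_conjTranspose_mul_self (X : Matrix m n 𝕜) :
    RCLike.re (Xᴴ * X).trace = ∑ p : m × n, ‖X p.1 p.2‖ ^ 2 := by
  simp [trace, mul_apply, RCLike.conj_mul, Fintype.sum_prod_type, Finset.sum_comm (γ := m)]

theorem re_trace_conjTranspose_mul_self_nonneg (X : Matrix m n 𝕜) :
    0 ≤ RCLike.re (Xᴴ * X).trace := by
  rw [re_trace_conjTranspose_mul_self]
  positivity

theorem re_trace_conjTranspose_mul_le (X Y : Matrix m n 𝕜) :
    RCLike.re (Xᴴ * Y).trace ≤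
      √(RCLike.re (Xᴴ * X).trace) * √(RCLike.re (Yᴴ * Y).trace) := by
  have h : RCLike.re (Xᴴ * Y).trace ≤ ∑ p : m × n, ‖X p.1 p.2‖ * ‖Y p.1 p.2‖ := by
    simp only [trace, diag, mul_apply, conjTranspose_apply, map_sum, Fintype.sum_prod_type]
    rw [Finset.sum_comm]
    gcongr with i _ j _
    exact (RCLike.re_le_norm _).trans (by simp)
  rw [re_trace_conjTranspose_mul_self, re_trace_conjTranspose_mul_self]
  exact h.trans (Real.sum_mul_le_sqrt_mul_sqrt _ _ _)

theorem re_trace_conjTranspose_mul_mul_le [DecidableEq n] {P : Matrix n n 𝕜}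
    (hP : (1 - P).PosSemidef) (B : Matrix n m 𝕜) :
    RCLike.re (Bᴴ * P * B).trace ≤ RCLike.re (Bᴴ * B).trace := by
  have h := (hP.conjTranspose_mul_mul_same B).trace_nonneg
  rw [Matrix.mul_sub, Matrix.sub_mul, Matrix.mul_one, trace_sub, RCLike.nonneg_iff] at h
  simpa [sub_nonneg] using h.1

def IsPartialIsometry (U : Matrix m n 𝕜) : Prop := U * Uᴴ * U = U

namespace IsPartialIsometry

theorem conjTranspose {U : Matrix m n 𝕜} (hU : U.IsPartialIsometry) :
    Uᴴ.IsPartialIsometry := by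
  simpa only [IsPartialIsometry, conjTranspose_mul, conjTranspose_conjTranspose,
    Matrix.mul_assoc] using congrArg Matrix.conjTranspose hU

theorem posSemidef_one_sub_conjTranspose_mul_self [DecidableEq n] {U : Matrix m n 𝕜}
    (hU : U.IsPartialIsometry) : (1 - Uᴴ * U).PosSemidef := by
  have hP : Uᴴ * U * (Uᴴ * U) = Uᴴ * U := by
    rw [Matrix.mul_assoc, ← Matrix.mul_assoc U, hU]
  have h : (1 - Uᴴ * U)ᴴ * (1 - Uᴴ * U) = 1 - Uᴴ * U := by
    simp only [conjTranspose_sub, conjTranspose_one, conjTranspose_mul,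
      conjTranspose_conjTranspose, Matrix.sub_mul, Matrix.mul_sub, Matrix.one_mul,
      Matrix.mul_one, hP, sub_self, sub_zero]
  rw [← h]
  exact posSemidef_conjTranspose_mul_self _

theorem posSemidef_one_sub_mul_conjTranspose_self [DecidableEq m] {U : Matrix m n 𝕜}
    (hU : U.IsPartialIsometry) : (1 - U * Uᴴ).PosSemidef := by
  simpa using hU.conjTranspose.posSemidef_one_sub_conjTranspose_mul_self

theorem re_trace_mul_mul_conjTranspose_mul_le [DecidableEq n] {U S : Matrix n n 𝕜}
    (hU : U.IsPartialIsometry) (hS : S.IsHermitian) :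
    RCLike.re (U * S * Uᴴ * S).trace ≤ RCLike.re (S * S).trace := by
  have hX : RCLike.re ((S * Uᴴ)ᴴ * (S * Uᴴ)).trace ≤ RCLike.re (S * S).trace := by
    have h := re_trace_conjTranspose_mul_mul_le hU.posSemidef_one_sub_conjTranspose_mul_self S
    rw [conjTranspose_mul, conjTranspose_conjTranspose, hS.eq, trace_mul_comm]
    simpa only [hS.eq, Matrix.mul_assoc] using h
  have hY : RCLike.re ((Uᴴ * S)ᴴ * (Uᴴ * S)).trace ≤ RCLike.re (S * S).trace := by
    have h := re_trace_conjTranspose_mul_mul_le hU.posSemidef_one_sub_mul_conjTranspose_self S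
    rw [conjTranspose_mul, conjTranspose_conjTranspose, hS.eq]
    simpa only [hS.eq, Matrix.mul_assoc] using h
  calc RCLike.re (U * S * Uᴴ * S).trace = RCLike.re ((S * Uᴴ)ᴴ * (Uᴴ * S)).trace := by
        rw [conjTranspose_mul, hS.eq, conjTranspose_conjTranspose, Matrix.mul_assoc]
    _ ≤ √(RCLike.re (S * S).trace) * √(RCLike.re (S * S).trace) :=
        (re_trace_conjTranspose_mul_le _ _).trans (by gcongr)
    _ = RCLike.re (S * S).trace :=
        Real.mul_self_sqrt ((re_trace_conjTranspose_mul_self_nonneg _).trans hX)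

theorem re_trace_conjTranspose_mul_le_sqrt [DecidableEq n] {U M A S σ : Matrix n n 𝕜}
    (hU : U.IsPartialIsometry) (hA : A.IsHermitian) (hAu : IsUnit A) (hAA : A * A = S)
    (hSS : S * S = σ) :
    RCLike.re (Uᴴ * M).trace ≤
      √(RCLike.re σ.trace * RCLike.re (A⁻¹ * M * S⁻¹ * Mᴴ * A⁻¹).trace) := by
  have hAd : IsUnit A.det := (isUnit_iff_isUnit_det A).1 hAu
  have hS : S.IsHermitian := by rw [← hAA, IsHermitian, conjTranspose_mul, hA.eq]
  set N := A⁻¹ * M * A⁻¹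
  set X := A * U * A with hX
  have hXH : Xᴴ = A * Uᴴ * A := by simp only [X, conjTranspose_mul, hA.eq, Matrix.mul_assoc]
  have hNH : Nᴴ = A⁻¹ * Mᴴ * A⁻¹ := by
    simp only [N, conjTranspose_mul, conjTranspose_nonsing_inv, hA.eq, Matrix.mul_assoc]
  have hUM : (Uᴴ * M).trace = (Nᴴᴴ * Xᴴ).trace := by
    rw [conjTranspose_conjTranspose, hXH]
    simp only [N, Matrix.mul_assoc, nonsing_inv_mul_cancel_left A _ hAd]
    rw [trace_mul_comm A⁻¹, Matrix.mul_assoc, Matrix.mul_assoc, mul_nonsing_inv _ hAd,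
      Matrix.mul_one, trace_mul_comm]
  have hNN : Nᴴᴴ * Nᴴ = A⁻¹ * M * S⁻¹ * Mᴴ * A⁻¹ := by
    rw [conjTranspose_conjTranspose, hNH, ← hAA, Matrix.mul_inv_rev]
    simp only [N, Matrix.mul_assoc]
  have hXX : RCLike.re (Xᴴᴴ * Xᴴ).trace ≤ RCLike.re σ.trace := by
    have h := hU.re_trace_mul_mul_conjTranspose_mul_le hS
    rw [hSS, ← hAA] at h
    rw [conjTranspose_conjTranspose, hXH, hX]
    simp only [Matrix.mul_assoc]
    rw [trace_mul_comm A]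
    simpa only [Matrix.mul_assoc] using h
  calc RCLike.re (Uᴴ * M).trace
      ≤ √(RCLike.re (Nᴴᴴ * Nᴴ).trace) * √(RCLike.re (Xᴴᴴ * Xᴴ).trace) :=
        hUM ▸ re_trace_conjTranspose_mul_le _ _
    _ ≤ √(RCLike.re (Nᴴᴴ * Nᴴ).trace) * √(RCLike.re σ.trace) := by gcongr
    _ = √(RCLike.re σ.trace * RCLike.re (A⁻¹ * M * S⁻¹ * Mᴴ * A⁻¹).trace) := by
        rw [mul_comm, ← hNN, Real.sqrt_mul' _ (re_trace_conjTranspose_mul_self_nonneg _)]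

end IsPartialIsometry

theorem exists_isPartialIsometry_conjTranspose_mul_eq [DecidableEq n] {M : Matrix m n 𝕜}
    {P : Matrix n n 𝕜} (hP : P.IsHermitian) (hMP : Mᴴ * M = P * P) :
    ∃ U : Matrix m n 𝕜, U.IsPartialIsometry ∧ Uᴴ * M = P := by
  obtain ⟨φ, e, rfl⟩ : ∃ (φ : Matrix n n 𝕜 ≃⋆ₐ[𝕜] Matrix n n 𝕜) (e : n → ℝ),
      P = φ (diagonal fun i => (e i : 𝕜)) := ⟨_, _, hP.spectral_theorem⟩
  -- the Moore–Penrose pseudo-inverse of `P`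
  set Q := φ (diagonal fun i => ((e i)⁻¹ : 𝕜))
  have hQ : Qᴴ = Q := by
    rw [← star_eq_conjTranspose, ← map_star, star_eq_conjTranspose, diagonal_conjTranspose]
    congr 2
    funext i
    simp
  have hQMM : Q * (Mᴴ * M) = φ (diagonal fun i => (e i : 𝕜)) := by
    simp only [Q, hMP, ← map_mul φ, diagonal_mul_diagonal, ← mul_assoc, inv_mul_mul_self]
  have hQQMMQ : Q * Q * (Mᴴ * M) * Q = Q := by
    simp only [Q, hMP, ← map_mul φ, diagonal_mul_diagonal]
    congr 2
    funext i
    rcases eq_or_ne (e i) 0 with h | h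
    · simp [h]
    · field_simp
  refine ⟨M * Q, ?_, ?_⟩
  · rw [IsPartialIsometry, conjTranspose_mul, hQ]
    conv_rhs => rw [← hQQMMQ]
    simp only [Matrix.mul_assoc]
  · rw [conjTranspose_mul, hQ, Matrix.mul_assoc, hQMM]

end Matrix

/-- `‖M‖₁ ≤ √(tr[σ] · tr[σ^{-1/4} M σ^{-1/2} M† σ^{-1/4}])` for positive definite `σ`. -/
theorem traceNorm_le_sqrt_trace_mul_trace
    {n : Type*} [Fintype n] [DecidableEq n]
    (M σ : Matrix n n ℂ) (hσ : σ.PosDef) :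
    traceNorm M ≤ Real.sqrt ((σ.trace).re *
      (((hσ.posSemidef.posSemidef_sqrt.sqrt)⁻¹ * M * (hσ.posSemidef.sqrt)⁻¹ * Mᴴ *
        (hσ.posSemidef.posSemidef_sqrt.sqrt)⁻¹).trace).re) := by
  have hMM := posSemidef_conjTranspose_mul_self M
  obtain ⟨U, hU, hUM⟩ :=
    exists_isPartialIsometry_conjTranspose_mul_eq hMM.posSemidef_sqrt.1 hMM.sqrt_mul_self.symm
  have hS := hσ.posSemidef.posSemidef_sqrt
  have hAA := hS.sqrt_mul_self
  have hSS := hσ.posSemidef.sqrt_mul_self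
  have hA : IsUnit hS.sqrt := by
    rw [← isUnit_mul_self_iff, ← isUnit_mul_self_iff, hAA, hSS]
    exact hσ.isUnit
  calc traceNorm M = RCLike.re (Uᴴ * M).trace := by rw [hUM]; rfl
    _ ≤ _ := hU.re_trace_conjTranspose_mul_le_sqrt hS.posSemidef_sqrt.1 hA hAA hSS
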